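/- (Theorem 3, energy lower bound, eq. (40).) Assume the abstract FDTD-Q region setup with N ≥ 1, and additionally: the block matrix 𝒫 := Matrix.fromBlocks V (-(Δt/(2*ℏ)) • H) (-(Δt/(2*ℏ)) • H) V is positive definite, with smallest eigenvalue λmin > 0; there is v > 0 with d i ≤ v for all i; H = K + V * Matrix.diagonal Upot for some symmetric positive semidefinite matrix K and some Upot : Fin N → ℝ; and there is Pmax : ℝ such that for all n, Sum.elim (ψR n) (ψI n) ⬝ᵥ 𝒫.mulVec (Sum.elim (ψR n) (ψI n)) ≤ Pmax. Let Umin be the minimum of Upot over Fin N. Then for all n ≥ 1: ℋ n ≥ v * (Pmax / λmin) * (min Umin 0 - 4*ℏ/Δt). -/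

import Mathlib

/-!
The stiffness part `K` is positive semidefinite, so both quadratic terms `ψ ⬝ᵥ H ψ` of the energy
are at least `min Umin 0 · v · ‖ψ‖²`, and by `2ab ≥ -(a² + b²)` the cross term, a `V`-weighted
product of two time differences, is at least `-v/2` times the sum of their squared norms. The
Rayleigh bound `λmin ‖x‖² ≤ xᵀ 𝒫 x` turns the bound on the probability form into
`‖ψR n‖² + ‖ψI n‖² ≤ Pmax / λmin` at every time step, which controls all of these norms; the cross
term then costs at most `3 v (Pmax / λmin) ℏ / Δt`.
-/

open Matrix

section

variable {n : Type*} [Fintype n]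

theorem dotProduct_sub_self_le (x y : n → ℝ) :
    (x - y) ⬝ᵥ (x - y) ≤ 2 * (x ⬝ᵥ x) + 2 * (y ⬝ᵥ y) := by
  simp only [dotProduct, Finset.mul_sum, ← Finset.sum_add_distrib, Pi.sub_apply]
  exact Finset.sum_le_sum fun i _ ↦ by nlinarith [sq_nonneg (x i + y i)]

variable [DecidableEq n]

theorem Matrix.IsHermitian.sInf_spectrum_mul_dotProduct_self_le
    {A : Matrix n n ℝ} (hA : A.IsHermitian) (x : n → ℝ) :
    sInf (spectrum ℝ A) * (x ⬝ᵥ x) ≤ x ⬝ᵥ A *ᵥ x := by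
  open scoped MatrixOrder in
  have hle : algebraMap ℝ _ (sInf (spectrum ℝ A)) ≤ A :=
    (algebraMap_le_iff_le_spectrum hA).2 fun _ hμ ↦ csInf_le (finite_spectrum A).bddBelow hμ
  have := (le_iff.1 hle).dotProduct_mulVec_nonneg x
  simpa only [star_trivial, Algebra.algebraMap_eq_smul_one, sub_mulVec, smul_mulVec, one_mulVec,
    dotProduct_sub, dotProduct_smul, smul_eq_mul, sub_nonneg] using this

theorem dotProduct_diagonal_mulVec (w x y : n → ℝ) :
    x ⬝ᵥ diagonal w *ᵥ y = ∑ i, w i * (x i * y i) := by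
  simp only [dotProduct, mulVec_diagonal]
  exact Finset.sum_congr rfl fun i _ ↦ by ring

theorem mul_dotProduct_self_le_dotProduct_diagonal_mulVec {w : n → ℝ} {c : ℝ}
    (hw : ∀ i, c ≤ w i) (x : n → ℝ) : c * (x ⬝ᵥ x) ≤ x ⬝ᵥ diagonal w *ᵥ x := by
  rw [dotProduct_diagonal_mulVec, dotProduct, Finset.mul_sum]
  exact Finset.sum_le_sum fun i _ ↦ mul_le_mul_of_nonneg_right (hw i) (mul_self_nonneg _)

theorem Matrix.PosSemidef.mul_dotProduct_self_le_dotProduct_add_diagonal_mulVec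
    {K : Matrix n n ℝ} (hK : K.PosSemidef) {d U : n → ℝ} {v c : ℝ} (hd : ∀ i, 0 ≤ d i)
    (hdv : ∀ i, d i ≤ v) (hc : c ≤ 0) (hcU : ∀ i, c ≤ U i) (x : n → ℝ) :
    c * v * (x ⬝ᵥ x) ≤ x ⬝ᵥ (K + diagonal d * diagonal U) *ᵥ x := by
  have hdU : ∀ i, c * v ≤ d i * U i := fun i ↦
    calc c * v ≤ c * d i := mul_le_mul_of_nonpos_left (hdv i) hc
      _ ≤ d i * U i := by rw [mul_comm]; exact mul_le_mul_of_nonneg_left (hcU i) (hd i)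
  have hKx := hK.dotProduct_mulVec_nonneg x
  rw [star_trivial] at hKx
  rw [diagonal_mul_diagonal', add_mulVec, dotProduct_add]
  linarith [mul_dotProduct_self_le_dotProduct_diagonal_mulVec 
    (w := fun i ↦ d i * U i) hdU x]

theorem neg_le_dotProduct_diagonal_mulVec {d : n → ℝ} {v : ℝ} (hd : ∀ i, 0 ≤ d i)
    (hdv : ∀ i, d i ≤ v) (a b : n → ℝ) :
    -(v / 2 * (a ⬝ᵥ a + b ⬝ᵥ b)) ≤ a ⬝ᵥ diagonal d *ᵥ b := by
  rw [dotProduct_diagonal_mulVec, dotProduct, dotProduct, ← Finset.sum_add_distrib,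
    Finset.mul_sum, ← Finset.sum_neg_distrib]
  refine Finset.sum_le_sum fun i _ ↦ ?_
  nlinarith [mul_nonneg (hd i) (sq_nonneg (a i + b i)),
    mul_nonneg (sub_nonneg.2 (hdv i)) (add_nonneg (mul_self_nonneg (a i)) (mul_self_nonneg (b i)))]

end

theorem fdtdq_energy_lower_bound
    (N : ℕ) (hN : 0 < N) (ℏ Δt : ℝ) (hℏ : 0 < ℏ) (hΔt : 0 < Δt)
    (H : Matrix (Fin N) (Fin N) ℝ)
    (d : Fin N → ℝ) (hd : ∀ i, 0 < d i)
    (ψR ψI : ℕ → (Fin N → ℝ))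
    (Pmat : Matrix (Fin N ⊕ Fin N) (Fin N ⊕ Fin N) ℝ)
    (hPD : Pmat.PosDef)
    (lmin : ℝ) (hlmin : lmin = sInf (spectrum ℝ Pmat)) (hlpos : 0 < lmin)
    (v : ℝ) (hv : 0 < v) (hdv : ∀ i, d i ≤ v)
    (K : Matrix (Fin N) (Fin N) ℝ) (hK : K.PosSemidef)
    (Upot : Fin N → ℝ)
    (hHdec : H = K + Matrix.diagonal d * Matrix.diagonal Upot)
    (Pmax : ℝ)
    (hPmax : ∀ n : ℕ,
        Sum.elim (ψR n) (ψI n) ⬝ᵥ Pmat.mulVec (Sum.elim (ψR n) (ψI n)) ≤ Pmax)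
    (En : ℕ → ℝ)
    (hEn : ∀ n : ℕ, 1 ≤ n → En n = ψR n ⬝ᵥ H.mulVec (ψR n)
        + ψI n ⬝ᵥ H.mulVec (ψI n)
        + (ℏ/Δt) * ((ψR n - ψR (n-1)) ⬝ᵥ (Matrix.diagonal d).mulVec (ψI (n+1) - ψI n))) :
    ∀ n : ℕ, 1 ≤ n →
      En n ≥ v * (Pmax / lmin)
        * (min (Finset.univ.inf' ⟨⟨0, hN⟩, Finset.mem_univ _⟩ Upot) 0 - 4*ℏ/Δt) := by
  intro n hn
  set P := Pmax / lmin
  set U0 := min (Finset.univ.inf' ⟨⟨0, hN⟩, Finset.mem_univ _⟩ Upot) 0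
  have hnorm : ∀ k, ψR k ⬝ᵥ ψR k + ψI k ⬝ᵥ ψI k ≤ P := fun k ↦ by
    have := hPD.isHermitian.sInf_spectrum_mul_dotProduct_self_le (Sum.elim (ψR k) (ψI k))
    rw [← hlmin, sumElim_dotProduct_sumElim] at this
    exact (le_div_iff₀' hlpos).2 (this.trans (hPmax k))
  have hnonneg : ∀ x : Fin N → ℝ, 0 ≤ x ⬝ᵥ x := fun x ↦ by
    simpa using dotProduct_self_star_nonneg x
  have hP : 0 ≤ P := (add_nonneg (hnonneg _) (hnonneg _)).trans (hnorm 0)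
  have hpot : ∀ x, U0 * v * (x ⬝ᵥ x) ≤ x ⬝ᵥ H *ᵥ x := hHdec ▸
    hK.mul_dotProduct_self_le_dotProduct_add_diagonal_mulVec (fun i ↦ (hd i).le) hdv
      (min_le_right _ _) (fun i ↦ (min_le_left _ _).trans (Finset.inf'_le _ (Finset.mem_univ i)))
  have hcross : -(3 * v * P) ≤ (ψR n - ψR (n - 1)) ⬝ᵥ diagonal d *ᵥ (ψI (n + 1) - ψI n) := by
    have hdiffs : (ψR n - ψR (n - 1)) ⬝ᵥ (ψR n - ψR (n - 1))
        + (ψI (n + 1) - ψI n) ⬝ᵥ (ψI (n + 1) - ψI n) ≤ 6 * P := by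
      linarith [dotProduct_sub_self_le (ψR n) (ψR (n - 1)),
        dotProduct_sub_self_le (ψI (n + 1)) (ψI n), hnorm n, hnorm (n - 1), hnorm (n + 1),
        hnonneg (ψI (n - 1)), hnonneg (ψR (n + 1))]
    linarith [mul_le_mul_of_nonneg_left hdiffs hv.le,
      neg_le_dotProduct_diagonal_mulVec (fun i ↦ (hd i).le) hdv
        (ψR n - ψR (n - 1)) (ψI (n + 1) - ψI n)]
  have hc : 0 ≤ ℏ / Δt := by positivity
  have hU0v : U0 * v ≤ 0 := mul_nonpos_of_nonpos_of_nonneg (min_le_right _ _) hv.le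
  have hsplit : v * P * (U0 - 4 * ℏ / Δt) = U0 * v * P - 4 * (ℏ / Δt) * (v * P) := by ring
  rw [hEn n hn, ge_iff_le, hsplit]
  linarith [hpot (ψR n), hpot (ψI n), mul_le_mul_of_nonpos_left (hnorm n) hU0v,
    mul_le_mul_of_nonneg_left hcross hc, mul_nonneg hc (mul_nonneg hv.le hP)]
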